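/- arXiv:2112.15489 — 3 statements merged into one kernel-verified Lean document; each statement's English description precedes it below -/
import Mathlib

section
/- Assume moreover that U+G < T. Then the multiobjective problem has no weak-only Pareto optimal points: every weak Pareto optimal point of the attainable set S is also a strong Pareto optimal point of S, i.e., the weak Pareto boundary coincides with the strong Pareto boundary. -/
/-!
Suppose `q ∈ S` dominates `p` with, say, `q.2 > p.2`, and let `x` attain `q`. Every SINR
depends on the downlink powers only through the user's own power and the total `P_un + P_mu`.
Scale the unicast powers by `1 - s` and spread the freed power `s · P_un` evenly over the
multicast groups: the total is unchanged, so `O_un` drops by at most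
`(1 - τ/T) (∑ α) |log₂ (1 - s)|`, which stays below the slack `q.2 - p.2` for small `s`, while
every multicast power strictly increases. As `S` lies in the nonnegative quadrant, the slack
forces `P_un > 0`, so the increase is genuine and `O_mu` strictly grows, unless some multicast
gain vanishes; then `O_mu(x) = 0`, and full pilot power makes the new multicast rate positive.
Either way `p` is strictly dominated in both coordinates. The case `q.1 > p.1` is symmetric.
-/

open Finset

noncomputable section

/-- Effective estimation quality `ξ_{jk} = τ q_{jk}^{up} η_{jk}² / (1 + Σ_t τ q_{jt}^{up} η_{jt})`. -/
def xiX {G : ℕ} {K : Fin G → ℕ} (η : ∀ j : Fin G, Fin (K j) → ℝ)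
    (τ : ℕ) (qup : ∀ j : Fin G, Fin (K j) → ℝ) (j : Fin G) (k : Fin (K j)) : ℝ :=
  (τ : ℝ) * qup j k * (η j k) ^ 2 / (1 + ∑ t, (τ : ℝ) * qup j t * η j t)

/-- Effective estimation quality `θ_m = τ p_m^{up} β_m² / (1 + τ p_m^{up} β_m)`. -/
def thetaX {U : ℕ} (β : Fin U → ℝ) (τ : ℕ) (pup : Fin U → ℝ) (m : Fin U) : ℝ :=
  (τ : ℝ) * pup m * (β m) ^ 2 / (1 + (τ : ℝ) * pup m * β m)

/-- The multicast objective
`O_mu(x) = (1-τ/T) log₂(1 + min_{j,k} N q_j^{dl} ξ_{jk} / (1 + η_{jk}(P_un+P_mu)))`. -/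
def OmuX {U G : ℕ} {K : Fin G → ℕ} (N T : ℕ) (η : ∀ j : Fin G, Fin (K j) → ℝ)
    (τ : ℕ) (qup : ∀ j : Fin G, Fin (K j) → ℝ) (qdl : Fin G → ℝ) (pdl : Fin U → ℝ) : ℝ :=
  (1 - (τ : ℝ) / (T : ℝ)) * Real.logb 2 (1 + ⨅ j : Fin G, ⨅ k : Fin (K j),
    (N : ℝ) * qdl j * xiX η τ qup j k / (1 + η j k * (∑ m, pdl m + ∑ i, qdl i)))

/-- The unicast objective
`O_un(x) = (1-τ/T) Σ_m α_m log₂(1 + N p_m^{dl} θ_m / (1 + β_m (P_un+P_mu)))`. -/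
def OunX {U G : ℕ} (N T : ℕ) (β α : Fin U → ℝ)
    (τ : ℕ) (pup pdl : Fin U → ℝ) (qdl : Fin G → ℝ) : ℝ :=
  (1 - (τ : ℝ) / (T : ℝ)) * ∑ m, α m * Real.logb 2 (1 +
    (N : ℝ) * pdl m * thetaX β τ pup m / (1 + β m * (∑ u, pdl u + ∑ j, qdl j)))

/-- The feasible set (resource bundle) `X` of the multiobjective problem. -/
def feasX {U G : ℕ} {K : Fin G → ℕ} (T : ℕ) (P : ℝ)
    (Emu : ∀ j : Fin G, Fin (K j) → ℝ) (Eun : Fin U → ℝ) (τ : ℕ)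
    (qup : ∀ j : Fin G, Fin (K j) → ℝ) (qdl : Fin G → ℝ) (pup pdl : Fin U → ℝ) : Prop :=
  U + G ≤ τ ∧ τ ≤ T ∧
    (∀ j, 0 ≤ qdl j) ∧ (∀ m, 0 ≤ pdl m) ∧
    (∀ j k, 0 ≤ qup j k ∧ (τ : ℝ) * qup j k ≤ Emu j k) ∧
    (∀ m, 0 ≤ pup m ∧ (τ : ℝ) * pup m ≤ Eun m) ∧
    ∑ m, pdl m + ∑ j, qdl j ≤ P

/-- The attainable objective set `S = {(O_mu(x), O_un(x)) : x ∈ X} ⊆ ℝ²`. -/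
def attainS {U G : ℕ} {K : Fin G → ℕ} (N T : ℕ) (P : ℝ)
    (η Emu : ∀ j : Fin G, Fin (K j) → ℝ) (β Eun α : Fin U → ℝ) : Set (ℝ × ℝ) :=
  {y | ∃ (τ : ℕ) (qup : ∀ j : Fin G, Fin (K j) → ℝ) (qdl : Fin G → ℝ)
      (pup pdl : Fin U → ℝ),
    feasX T P Emu Eun τ qup qdl pup pdl ∧
    y = (OmuX N T η τ qup qdl pdl, OunX N T β α τ pup pdl qdl)}

open Real

lemma logb_one_sub_add_logb_le {s z : ℝ} (hs0 : 0 ≤ s) (hs1 : s < 1) (hz : 0 ≤ z) :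
    logb 2 (1 - s) + logb 2 (1 + z) ≤ logb 2 (1 + (1 - s) * z) := by
  rw [← logb_mul (by linarith) (by linarith)]
  exact logb_le_logb_of_le one_lt_two (by nlinarith) (by nlinarith)

lemma exists_lt_mul_logb_one_sub {e C : ℝ} (he : e < 0) (hC : 0 ≤ C) :
    ∃ s, 0 < s ∧ s < 1 ∧ e < C * logb 2 (1 - s) := by
  have hc : e / (C + 1) < 0 := div_neg_of_neg_of_pos he (by linarith)
  refine ⟨1 - 2 ^ (e / (C + 1)), by linarith [rpow_lt_one_of_one_lt_of_neg one_lt_two hc],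
    by linarith [rpow_pos_of_pos two_pos (e / (C + 1))], ?_⟩
  rw [sub_sub_cancel, logb_rpow two_pos (by norm_num), mul_div_assoc', lt_div_iff₀ (by linarith)]
  linarith

lemma sum_add_sum_transfer {ι κ : Type*} [Fintype ι] [Fintype κ] [Nonempty κ]
    (s : ℝ) (v : ι → ℝ) (w : κ → ℝ) :
    ∑ i, (1 - s) * v i + ∑ j, (w j + s * (∑ i, v i) / Fintype.card κ) =
      ∑ i, v i + ∑ j, w j := by
  rw [← Finset.mul_sum, Finset.sum_add_distrib, Finset.sum_const, Finset.card_univ, nsmul_eq_mul]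
  field_simp
  ring

section minRate

variable {ι : Type*} {κ : ι → Type*} {c : ∀ i, κ i → ℝ} {v w : ι → ℝ}

def minRate (c : ∀ i, κ i → ℝ) (v : ι → ℝ) : ℝ :=
  logb 2 (1 + ⨅ i, ⨅ k, v i * c i k)

@[simp]
lemma minRate_zero (c : ∀ i, κ i → ℝ) : minRate c 0 = 0 := by
  simp [minRate]

lemma iInf_mul_nonneg (hc : ∀ i k, 0 ≤ c i k) (hv : ∀ i, 0 ≤ v i) :
    0 ≤ ⨅ i, ⨅ k, v i * c i k :=
  Real.iInf_nonneg fun i => Real.iInf_nonneg fun k => mul_nonneg (hv i) (hc i k)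

lemma minRate_nonneg (hc : ∀ i k, 0 ≤ c i k) (hv : ∀ i, 0 ≤ v i) : 0 ≤ minRate c v :=
  logb_nonneg one_lt_two (by linarith [iInf_mul_nonneg hc hv])

lemma minRate_eq_zero_of_exists [Finite ι] [∀ i, Finite (κ i)] (hc : ∀ i k, 0 ≤ c i k)
    (hv : ∀ i, 0 ≤ v i) (h : ∃ i k, c i k = 0) : minRate c v = 0 := by
  obtain ⟨i, k, hik⟩ := h
  have hle : ⨅ i, ⨅ k, v i * c i k ≤ 0 :=
    (Finite.ciInf_le _ i).trans (by simpa [hik] using Finite.ciInf_le (fun k => v i * c i k) k)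
  rw [minRate, le_antisymm hle (iInf_mul_nonneg hc hv), add_zero, logb_one]

lemma minRate_lt_minRate [Finite ι] [Nonempty ι] [∀ i, Finite (κ i)] [∀ i, Nonempty (κ i)]
    (hc : ∀ i k, 0 < c i k) (hv : ∀ i, 0 ≤ v i) (hvw : ∀ i, v i < w i) :
    minRate c v < minRate c w := by
  obtain ⟨i, hi⟩ := exists_eq_ciInf_of_finite (f := fun i => ⨅ k, w i * c i k)
  obtain ⟨k, hk⟩ := exists_eq_ciInf_of_finite (f := fun k => w i * c i k)
  have hlt : ⨅ i, ⨅ k, v i * c i k < ⨅ i, ⨅ k, w i * c i k := calc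
    _ ≤ v i * c i k := (Finite.ciInf_le _ i).trans (Finite.ciInf_le _ k)
    _ < w i * c i k := mul_lt_mul_of_pos_right (hvw i) (hc i k)
    _ = _ := by rw [← hi, ← hk]
  exact logb_lt_logb one_lt_two (by linarith [iInf_mul_nonneg (fun i k => (hc i k).le) hv])
    (by linarith)

lemma logb_one_sub_add_minRate_le {s : ℝ} (hs0 : 0 ≤ s) (hs1 : s < 1) (hc : ∀ i k, 0 ≤ c i k)
    (hv : ∀ i, 0 ≤ v i) : logb 2 (1 - s) + minRate c v ≤ minRate c fun i => (1 - s) * v i := by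
  have h := logb_one_sub_add_logb_le hs0 hs1 (iInf_mul_nonneg hc hv)
  simp_rw [Real.mul_iInf_of_nonneg (sub_nonneg.2 hs1.le), ← mul_assoc] at h
  exact h

lemma exists_lt_mul_minRate_smul {b C : ℝ} (hC : 0 ≤ C) (hc : ∀ i k, 0 ≤ c i k)
    (hv : ∀ i, 0 ≤ v i) (hb : b < C * minRate c v) :
    ∃ s, 0 < s ∧ s < 1 ∧ b < C * minRate c fun i => (1 - s) * v i := by
  obtain ⟨s, hs0, hs1, hs⟩ := exists_lt_mul_logb_one_sub (sub_neg.2 hb) hC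
  refine ⟨s, hs0, hs1, ?_⟩
  nlinarith [mul_le_mul_of_nonneg_left (logb_one_sub_add_minRate_le hs0.le hs1 hc hv) hC]

lemma sum_pos_of_minRate_pos [Fintype ι] (hv : ∀ i, 0 ≤ v i) (h : 0 < minRate c v) :
    0 < ∑ i, v i := by
  refine (Finset.sum_nonneg fun i _ => hv i).lt_of_ne fun h0 => h.ne' ?_
  rw [(funext fun i => (Finset.sum_eq_zero_iff_of_nonneg fun i _ => hv i).1 h0.symm i
    (Finset.mem_univ i) : v = 0), minRate_zero]

end minRate

section sumRate

variable {ι : Type*} [Fintype ι] {α d v w : ι → ℝ}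

def sumRate (α d v : ι → ℝ) : ℝ :=
  ∑ i, α i * logb 2 (1 + v i * d i)

@[simp]
lemma sumRate_zero (α d : ι → ℝ) : sumRate α d 0 = 0 := by
  simp [sumRate]

lemma sumRate_nonneg (hα : ∀ i, 0 ≤ α i) (hd : ∀ i, 0 ≤ d i) (hv : ∀ i, 0 ≤ v i) :
    0 ≤ sumRate α d v :=
  Finset.sum_nonneg fun i _ =>
    mul_nonneg (hα i) (logb_nonneg one_lt_two (by nlinarith [mul_nonneg (hv i) (hd i)]))

lemma sumRate_eq_zero_of_forall (hd : ∀ i, d i = 0) : sumRate α d v = 0 := by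
  simp [sumRate, hd]

lemma sumRate_lt_sumRate (hα : ∀ i, 0 < α i) (hd : ∀ i, 0 ≤ d i) (hd' : ∃ i, 0 < d i)
    (hv : ∀ i, 0 ≤ v i) (hvw : ∀ i, v i < w i) : sumRate α d v < sumRate α d w := by
  obtain ⟨i, hi⟩ := hd'
  refine Finset.sum_lt_sum (fun i _ => ?_) ⟨i, Finset.mem_univ i, ?_⟩
  · refine mul_le_mul_of_nonneg_left (logb_le_logb_of_le one_lt_two ?_ ?_) (hα i).le
    · nlinarith [mul_nonneg (hv i) (hd i)]
    · nlinarith [mul_le_mul_of_nonneg_right (hvw i).le (hd i)]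
  · refine mul_lt_mul_of_pos_left (logb_lt_logb one_lt_two ?_ ?_) (hα i)
    · nlinarith [mul_nonneg (hv i) (hd i)]
    · nlinarith [mul_lt_mul_of_pos_right (hvw i) hi]

lemma logb_one_sub_add_sumRate_le {s : ℝ} (hs0 : 0 ≤ s) (hs1 : s < 1) (hα : ∀ i, 0 ≤ α i)
    (hd : ∀ i, 0 ≤ d i) (hv : ∀ i, 0 ≤ v i) :
    (∑ i, α i) * logb 2 (1 - s) + sumRate α d v ≤ sumRate α d fun i => (1 - s) * v i := by
  rw [sumRate, sumRate, Finset.sum_mul, ← Finset.sum_add_distrib]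
  refine Finset.sum_le_sum fun i _ => ?_
  have h := logb_one_sub_add_logb_le hs0 hs1 (mul_nonneg (hv i) (hd i))
  rw [← mul_assoc] at h
  nlinarith [mul_le_mul_of_nonneg_left h (hα i)]

lemma exists_lt_mul_sumRate_smul {b C : ℝ} (hC : 0 ≤ C) (hα : ∀ i, 0 ≤ α i)
    (hd : ∀ i, 0 ≤ d i) (hv : ∀ i, 0 ≤ v i) (hb : b < C * sumRate α d v) :
    ∃ s, 0 < s ∧ s < 1 ∧ b < C * sumRate α d fun i => (1 - s) * v i := by
  obtain ⟨s, hs0, hs1, hs⟩ :=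
    exists_lt_mul_logb_one_sub (sub_neg.2 hb) (mul_nonneg hC (Finset.sum_nonneg fun i _ => hα i))
  refine ⟨s, hs0, hs1, ?_⟩
  nlinarith [mul_le_mul_of_nonneg_left (logb_one_sub_add_sumRate_le hs0.le hs1 hα hd hv) hC]

lemma sum_pos_of_sumRate_pos (hv : ∀ i, 0 ≤ v i) (h : 0 < sumRate α d v) : 0 < ∑ i, v i := by
  refine (Finset.sum_nonneg fun i _ => hv i).lt_of_ne fun h0 => h.ne' ?_
  rw [(funext fun i => (Finset.sum_eq_zero_iff_of_nonneg fun i _ => hv i).1 h0.symm i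
    (Finset.mem_univ i) : v = 0), sumRate_zero]

end sumRate

section Gains

variable {U G : ℕ} {K : Fin G → ℕ} {N τ : ℕ} {D : ℝ}
  {η : ∀ j : Fin G, Fin (K j) → ℝ} {qup : ∀ j : Fin G, Fin (K j) → ℝ}
  {β pup : Fin U → ℝ}

def muGain (N : ℕ) (η : ∀ j : Fin G, Fin (K j) → ℝ) (τ : ℕ) (qup : ∀ j : Fin G, Fin (K j) → ℝ)
    (D : ℝ) (j : Fin G) (k : Fin (K j)) : ℝ :=
  N * xiX η τ qup j k / (1 + η j k * D)

def unGain (N : ℕ) (β : Fin U → ℝ) (τ : ℕ) (pup : Fin U → ℝ) (D : ℝ) (m : Fin U) : ℝ :=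
  N * thetaX β τ pup m / (1 + β m * D)

lemma OmuX_eq (T : ℕ) (qdl : Fin G → ℝ) (pdl : Fin U → ℝ) :
    OmuX N T η τ qup qdl pdl =
      (1 - (τ : ℝ) / T) * minRate (muGain N η τ qup (∑ m, pdl m + ∑ j, qdl j)) qdl := by
  simp only [OmuX, minRate, muGain, mul_div_assoc, mul_assoc, mul_left_comm (N : ℝ)]

lemma OunX_eq (T : ℕ) (α : Fin U → ℝ) (pdl : Fin U → ℝ) (qdl : Fin G → ℝ) :
    OunX N T β α τ pup pdl qdl =
      (1 - (τ : ℝ) / T) * sumRate α (unGain N β τ pup (∑ m, pdl m + ∑ j, qdl j)) pdl := by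
  simp only [OunX, sumRate, unGain, mul_div_assoc, mul_assoc, mul_left_comm (N : ℝ)]

lemma muGain_nonneg (hη : ∀ j k, 0 < η j k) (hqup : ∀ j k, 0 ≤ qup j k) (hD : 0 ≤ D)
    (j : Fin G) (k : Fin (K j)) : 0 ≤ muGain N η τ qup D j k := by
  have hsum : 0 ≤ ∑ t, (τ : ℝ) * qup j t * η j t :=
    Finset.sum_nonneg fun t _ => by have := hqup j t; have := hη j t; positivity
  have := hqup j k; have := hη j k
  unfold muGain xiX; positivity

lemma muGain_pos (hN : 0 < N) (hτ : 0 < τ) (hη : ∀ j k, 0 < η j k) (hqup : ∀ j k, 0 < qup j k)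
    (hD : 0 ≤ D) (j : Fin G) (k : Fin (K j)) : 0 < muGain N η τ qup D j k := by
  have hsum : 0 ≤ ∑ t, (τ : ℝ) * qup j t * η j t :=
    Finset.sum_nonneg fun t _ => by have := hqup j t; have := hη j t; positivity
  have := hqup j k; have := hη j k
  unfold muGain xiX; positivity

lemma unGain_nonneg (hβ : ∀ m, 0 < β m) (hpup : ∀ m, 0 ≤ pup m) (hD : 0 ≤ D) (m : Fin U) :
    0 ≤ unGain N β τ pup D m := by
  have := hpup m; have := hβ m
  unfold unGain thetaX; positivity

lemma unGain_pos (hN : 0 < N) (hτ : 0 < τ) (hβ : ∀ m, 0 < β m) (hpup : ∀ m, 0 < pup m)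
    (hD : 0 ≤ D) (m : Fin U) : 0 < unGain N β τ pup D m := by
  have := hpup m; have := hβ m
  unfold unGain thetaX; positivity

end Gains

section Feasible

variable {U G : ℕ} {K : Fin G → ℕ} {N T τ : ℕ} {P : ℝ}
  {η Emu qup : ∀ j : Fin G, Fin (K j) → ℝ} {qdl : Fin G → ℝ} {β Eun α pup pdl : Fin U → ℝ}

lemma feasX.one_sub_div_nonneg (hx : feasX T P Emu Eun τ qup qdl pup pdl) :
    0 ≤ 1 - (τ : ℝ) / T :=
  sub_nonneg.2 (div_le_one_of_le₀ (by exact_mod_cast hx.2.1) (Nat.cast_nonneg _))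

lemma feasX.sum_nonneg (hx : feasX T P Emu Eun τ qup qdl pup pdl) :
    0 ≤ ∑ m, pdl m + ∑ j, qdl j :=
  add_nonneg (Finset.sum_nonneg fun m _ => hx.2.2.2.1 m)
    (Finset.sum_nonneg fun j _ => hx.2.2.1 j)

lemma exists_qup_minRate_lt (hG : 1 ≤ G) (hK : ∀ j, 1 ≤ K j) (hN : 0 < N) (hτ : 0 < τ)
    (hη : ∀ j k, 0 < η j k) (hEmu : ∀ j k, 0 < Emu j k) {D : ℝ} (hD : 0 ≤ D)
    (hqup : ∀ j k, 0 ≤ qup j k ∧ (τ : ℝ) * qup j k ≤ Emu j k) {qdl' : Fin G → ℝ}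
    (hqdl : ∀ j, 0 ≤ qdl j) (hlt : ∀ j, qdl j < qdl' j) :
    ∃ qup' : ∀ j : Fin G, Fin (K j) → ℝ,
      (∀ j k, 0 ≤ qup' j k ∧ (τ : ℝ) * qup' j k ≤ Emu j k) ∧
        minRate (muGain N η τ qup D) qdl < minRate (muGain N η τ qup' D) qdl' := by
  have : Nonempty (Fin G) := ⟨⟨0, hG⟩⟩
  have (j : Fin G) : Nonempty (Fin (K j)) := ⟨⟨0, hK j⟩⟩
  have hc := muGain_nonneg (N := N) (τ := τ) hη (fun j k => (hqup j k).1) hD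
  by_cases hpos : ∀ j k, 0 < muGain N η τ qup D j k
  · exact ⟨qup, hqup, minRate_lt_minRate hpos hqdl hlt⟩
  push Not at hpos
  obtain ⟨j, k, hjk⟩ := hpos
  have hτR : (0 : ℝ) < τ := by exact_mod_cast hτ
  have hfull : ∀ j k, 0 < Emu j k / τ := fun j k => div_pos (hEmu j k) hτR
  refine ⟨fun j k => Emu j k / τ, fun j k => ⟨(hfull j k).le, (mul_div_cancel₀ _ hτR.ne').le⟩, ?_⟩
  rw [minRate_eq_zero_of_exists hc hqdl ⟨j, k, le_antisymm hjk (hc j k)⟩,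
    ← minRate_zero (muGain N η τ (fun j k => Emu j k / τ) D)]
  exact minRate_lt_minRate (muGain_pos hN hτ hη hfull hD) (fun _ => le_rfl)
    fun j => (hqdl j).trans_lt (hlt j)

lemma exists_pup_sumRate_lt (hU : 1 ≤ U) (hN : 0 < N) (hτ : 0 < τ) (hβ : ∀ m, 0 < β m)
    (hEun : ∀ m, 0 < Eun m) (hα : ∀ m, 0 < α m) {D : ℝ} (hD : 0 ≤ D)
    (hpup : ∀ m, 0 ≤ pup m ∧ (τ : ℝ) * pup m ≤ Eun m) {pdl' : Fin U → ℝ}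
    (hpdl : ∀ m, 0 ≤ pdl m) (hlt : ∀ m, pdl m < pdl' m) :
    ∃ pup' : Fin U → ℝ, (∀ m, 0 ≤ pup' m ∧ (τ : ℝ) * pup' m ≤ Eun m) ∧
      sumRate α (unGain N β τ pup D) pdl < sumRate α (unGain N β τ pup' D) pdl' := by
  have hd := unGain_nonneg (N := N) (τ := τ) hβ (fun m => (hpup m).1) hD
  by_cases hpos : ∃ m, 0 < unGain N β τ pup D m
  · exact ⟨pup, hpup, sumRate_lt_sumRate hα hd hpos hpdl hlt⟩
  push Not at hpos
  have hτR : (0 : ℝ) < τ := by exact_mod_cast hτ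
  have hfull : ∀ m, 0 < Eun m / τ := fun m => div_pos (hEun m) hτR
  refine ⟨fun m => Eun m / τ, fun m => ⟨(hfull m).le, (mul_div_cancel₀ _ hτR.ne').le⟩, ?_⟩
  rw [sumRate_eq_zero_of_forall fun m => le_antisymm (hpos m) (hd m),
    ← sumRate_zero α (unGain N β τ (fun m => Eun m / τ) D)]
  have hd' := unGain_pos hN hτ hβ hfull hD
  exact sumRate_lt_sumRate hα (fun m => (hd' m).le) ⟨⟨0, hU⟩, hd' _⟩ (fun _ => le_rfl)
    fun m => (hpdl m).trans_lt (hlt m)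

lemma nonneg_of_mem_attainS (hη : ∀ j k, 0 < η j k) (hβ : ∀ m, 0 < β m) (hα : ∀ m, 0 < α m)
    {y : ℝ × ℝ} (hy : y ∈ attainS N T P η Emu β Eun α) : 0 ≤ y.1 ∧ 0 ≤ y.2 := by
  obtain ⟨τ, qup, qdl, pup, pdl, hx, rfl⟩ := hy
  have hf := hx.one_sub_div_nonneg
  have hD := hx.sum_nonneg
  obtain ⟨-, -, hqdl, hpdl, hqup, hpup, -⟩ := hx
  rw [OmuX_eq, OunX_eq]
  exact ⟨mul_nonneg hf (minRate_nonneg (muGain_nonneg hη (fun j k => (hqup j k).1) hD) hqdl),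
    mul_nonneg hf (sumRate_nonneg (fun m => (hα m).le)
      (unGain_nonneg hβ (fun m => (hpup m).1) hD) hpdl)⟩

lemma exists_gt_gt_of_le_of_lt (hG : 1 ≤ G) (hK : ∀ j, 1 ≤ K j) (hN : 1 ≤ N)
    (hη : ∀ j k, 0 < η j k) (hEmu : ∀ j k, 0 < Emu j k) (hβ : ∀ m, 0 < β m) (hα : ∀ m, 0 < α m)
    (hx : feasX T P Emu Eun τ qup qdl pup pdl) {a b : ℝ} (hb0 : 0 ≤ b)
    (ha : a ≤ OmuX N T η τ qup qdl pdl) (hb : b < OunX N T β α τ pup pdl qdl) :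
    ∃ y ∈ attainS N T P η Emu β Eun α, a < y.1 ∧ b < y.2 := by
  have hf := hx.one_sub_div_nonneg
  have hD := hx.sum_nonneg
  obtain ⟨hτ, hτT, hqdl, hpdl, hqup, hpup, hP⟩ := hx
  have : Nonempty (Fin G) := ⟨⟨0, hG⟩⟩
  rw [OmuX_eq] at ha
  rw [OunX_eq] at hb
  have hd := unGain_nonneg (N := N) (τ := τ) hβ (fun m => (hpup m).1) hD
  have hrate := sumRate_nonneg (fun m => (hα m).le) hd hpdl
  have hpos := hb0.trans_lt hb
  obtain ⟨s, hs0, hs1, hbs⟩ := exists_lt_mul_sumRate_smul hf (fun m => (hα m).le) hd hpdl hb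
  have htotal := sum_add_sum_transfer s pdl qdl
  simp only [Fintype.card_fin] at htotal
  have hlt : ∀ j, qdl j < qdl j + s * (∑ m, pdl m) / G := fun j =>
    lt_add_of_pos_right _ (div_pos (mul_pos hs0 (sum_pos_of_sumRate_pos hpdl
      (pos_of_mul_pos_right hpos hf))) (by exact_mod_cast hG))
  obtain ⟨qup', hqup', hmu⟩ := exists_qup_minRate_lt hG hK hN (by omega) hη hEmu hD hqup hqdl hlt
  refine ⟨_, ⟨τ, qup', _, pup, _, ⟨hτ, hτT, fun j => (hqdl j).trans (hlt j).le,
    fun m => mul_nonneg (by linarith) (hpdl m), hqup', hpup, htotal ▸ hP⟩, rfl⟩, ?_, ?_⟩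
  · rw [OmuX_eq, htotal]
    exact ha.trans_lt (mul_lt_mul_of_pos_left hmu (pos_of_mul_pos_left hpos hrate))
  · rw [OunX_eq, htotal]
    exact hbs

lemma exists_gt_gt_of_lt_of_le (hU : 1 ≤ U) (hN : 1 ≤ N)
    (hη : ∀ j k, 0 < η j k) (hβ : ∀ m, 0 < β m) (hEun : ∀ m, 0 < Eun m) (hα : ∀ m, 0 < α m)
    (hx : feasX T P Emu Eun τ qup qdl pup pdl) {a b : ℝ} (ha0 : 0 ≤ a)
    (ha : a < OmuX N T η τ qup qdl pdl) (hb : b ≤ OunX N T β α τ pup pdl qdl) :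
    ∃ y ∈ attainS N T P η Emu β Eun α, a < y.1 ∧ b < y.2 := by
  have hf := hx.one_sub_div_nonneg
  have hD := hx.sum_nonneg
  obtain ⟨hτ, hτT, hqdl, hpdl, hqup, hpup, hP⟩ := hx
  have : Nonempty (Fin U) := ⟨⟨0, hU⟩⟩
  rw [OmuX_eq] at ha
  rw [OunX_eq] at hb
  have hc := muGain_nonneg (N := N) (τ := τ) hη (fun j k => (hqup j k).1) hD
  have hrate := minRate_nonneg hc hqdl
  have hpos := ha0.trans_lt ha
  obtain ⟨s, hs0, hs1, has⟩ := exists_lt_mul_minRate_smul hf hc hqdl ha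
  have htotal := sum_add_sum_transfer s qdl pdl
  simp only [Fintype.card_fin] at htotal
  rw [add_comm, add_comm (∑ j, qdl j)] at htotal
  have hlt : ∀ m, pdl m < pdl m + s * (∑ j, qdl j) / U := fun m =>
    lt_add_of_pos_right _ (div_pos (mul_pos hs0 (sum_pos_of_minRate_pos hqdl
      (pos_of_mul_pos_right hpos hf))) (by exact_mod_cast hU))
  obtain ⟨pup', hpup', hun⟩ :=
    exists_pup_sumRate_lt hU hN (by omega) hβ hEun hα hD hpup hpdl hlt
  refine ⟨_, ⟨τ, qup, _, pup', _, ⟨hτ, hτT, fun j => mul_nonneg (by linarith) (hqdl j),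
    fun m => (hpdl m).trans (hlt m).le, hqup, hpup', htotal ▸ hP⟩, rfl⟩, ?_, ?_⟩
  · rw [OmuX_eq, htotal]
    exact has
  · rw [OunX_eq, htotal]
    exact hb.trans_lt (mul_lt_mul_of_pos_left hun (pos_of_mul_pos_left hpos hrate))

end Feasible

theorem moop_weak_pareto_is_strong_general
    (U G : ℕ) (hU : 1 ≤ U) (hG : 1 ≤ G) (K : Fin G → ℕ) (hK : ∀ j, 1 ≤ K j)
    (N : ℕ) (hN : 1 ≤ N) (T : ℕ)
    (P : ℝ)
    (η Emu : ∀ j : Fin G, Fin (K j) → ℝ) (β Eun α : Fin U → ℝ)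
    (hη : ∀ j k, 0 < η j k) (hEmu : ∀ j k, 0 < Emu j k)
    (hβ : ∀ m, 0 < β m) (hEun : ∀ m, 0 < Eun m) (hα : ∀ m, 0 < α m)
    (p : ℝ × ℝ) (hpS : p ∈ attainS N T P η Emu β Eun α)
    (hweak : ¬ ∃ q ∈ attainS N T P η Emu β Eun α, p.1 < q.1 ∧ p.2 < q.2) :
    ¬ ∃ q ∈ attainS N T P η Emu β Eun α,
        (p.1 ≤ q.1 ∧ p.2 < q.2) ∨ (p.1 < q.1 ∧ p.2 ≤ q.2) := by
  rintro ⟨q, ⟨τ, qup, qdl, pup, pdl, hx, rfl⟩, hdom⟩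
  obtain ⟨ha0, hb0⟩ := nonneg_of_mem_attainS hη hβ hα hpS
  rcases hdom with ⟨ha, hb⟩ | ⟨ha, hb⟩
  · exact hweak (exists_gt_gt_of_le_of_lt hG hK hN hη hEmu hβ hα hx hb0 ha hb)
  · exact hweak (exists_gt_gt_of_lt_of_le hU hN hη hβ hEun hα hx ha0 ha hb)

/-- if `U+G < T`, every weak Pareto optimal point of the attainable
set `S` is also a strong Pareto optimal point, i.e., the weak and strong Pareto
boundaries coincide. -/
theorem moop_weak_pareto_is_strong
    (U G : ℕ) (hU : 1 ≤ U) (hG : 1 ≤ G) (K : Fin G → ℕ) (hK : ∀ j, 1 ≤ K j)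
    (N : ℕ) (hN : 1 ≤ N) (T : ℕ) (hT : U + G < T)
    (P : ℝ) (hP : 0 < P)
    (η Emu : ∀ j : Fin G, Fin (K j) → ℝ) (β Eun α : Fin U → ℝ)
    (hη : ∀ j k, 0 < η j k) (hEmu : ∀ j k, 0 < Emu j k)
    (hβ : ∀ m, 0 < β m) (hEun : ∀ m, 0 < Eun m) (hα : ∀ m, 0 < α m)
    (p : ℝ × ℝ) (hpS : p ∈ attainS N T P η Emu β Eun α)
    (hweak : ¬ ∃ q ∈ attainS N T P η Emu β Eun α, p.1 < q.1 ∧ p.2 < q.2) :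
    ¬ ∃ q ∈ attainS N T P η Emu β Eun α,
        (p.1 ≤ q.1 ∧ p.2 < q.2) ∨ (p.1 < q.1 ∧ p.2 ≤ q.2) :=
  moop_weak_pareto_is_strong_general U G hU hG K hK N hN T P η Emu β Eun α hη hEmu hβ hEun hα p hpS
    hweak
end
end

section
/- The attainable objective set S = {(O_mu(x), O_un(x)) : x ∈ X} of the joint unicast and multigroup multicast multiobjective problem is a convex subset of ℝ². -/
/-!
Scaling every downlink power by `P / (P_un + P_mu)` spends the whole budget and raises every
SINR, and a pilot phase longer than `U + G` only costs airtime. Hence every attainable point lies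
in the region of pairs `0 ≤ y ≤ c (log₂ (1 + Δ γ), Σ α_m log₂ (1 + SINR_m(p)))`, with
`c = 1 - (U + G) / T`, the power split `Δ + Σ p ≤ P` and the SINRs evaluated at full
interference `P`, where `γ` is a max-min multicast SINR per unit of multicast power.
Conversely every such point is attained exactly: shrinking the pilot energies moves each rate
continuously down to `0`. For fixed `γ` the region lies under two concave functions of the
power split, hence is convex, and it grows with `γ`, so the union over `γ` is convex as well.
-/

open Finset

noncomputable section

open Set Finset

theorem concaveOn_logb_one_add {b : ℝ} (hb : 1 < b) :
    ConcaveOn ℝ (Ici 0) fun t => Real.logb b (1 + t) := by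
  refine ⟨convex_Ici 0, fun x (hx : 0 ≤ x) y (hy : 0 ≤ y) a c ha hc hac => ?_⟩
  have hlog := strictConcaveOn_log_Ioi.concaveOn.2 (mem_Ioi.2 (by linarith : (0 : ℝ) < 1 + x))
    (mem_Ioi.2 (by linarith : (0 : ℝ) < 1 + y)) ha hc hac
  have hsum : a • (1 + x) + c • (1 + y) = 1 + (a • x + c • y) := by
    simp only [smul_eq_mul]; linear_combination hac
  rw [hsum] at hlog
  simp only [smul_eq_mul, Real.logb] at hlog ⊢
  rw [mul_div_assoc', mul_div_assoc', ← add_div]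
  exact div_le_div_of_nonneg_right hlog (Real.log_pos hb).le

theorem ConcaveOn.prodMk {𝕜 E β γ : Type*} [Semiring 𝕜] [PartialOrder 𝕜]
    [AddCommMonoid E] [AddCommMonoid β] [PartialOrder β] [AddCommMonoid γ] [PartialOrder γ]
    [SMul 𝕜 E] [SMul 𝕜 β] [SMul 𝕜 γ] {s : Set E} {f : E → β} {g : E → γ}
    (hf : ConcaveOn 𝕜 s f) (hg : ConcaveOn 𝕜 s g) : ConcaveOn 𝕜 s fun x => (f x, g x) :=
  ⟨hf.1, fun _ hx _ hy _ _ ha hb hab =>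
    Prod.mk_le_mk.2 ⟨hf.2 hx hy ha hb hab, hg.2 hx hy ha hb hab⟩⟩

theorem ConcaveOn.convex_biUnion_Icc {𝕜 E β : Type*} [Semiring 𝕜] [PartialOrder 𝕜]
    [AddCommMonoid E] [AddCommMonoid β] [PartialOrder β] [IsOrderedAddMonoid β] [Module 𝕜 E]
    [Module 𝕜 β] [PosSMulMono 𝕜 β] {s : Set E} {F : E → β} (hF : ConcaveOn 𝕜 s F) :
    Convex 𝕜 (⋃ x ∈ s, Icc 0 (F x)) := by
  intro y hy y' hy' a b ha hb hab
  simp only [mem_iUnion₂, Set.mem_Icc] at hy hy' ⊢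
  obtain ⟨x, hx, hy0, hyF⟩ := hy
  obtain ⟨x', hx', hy0', hyF'⟩ := hy'
  refine ⟨a • x + b • x', hF.1 hx hx' ha hb hab, ?_, ?_⟩
  · exact add_nonneg (smul_nonneg ha hy0) (smul_nonneg hb hy0')
  · exact (add_le_add (smul_le_smul_of_nonneg_left hyF ha)
      (smul_le_smul_of_nonneg_left hyF' hb)).trans (hF.2 hx hx' ha hb hab)

theorem MonotoneOn.convex_biUnion {𝕜 E ι : Type*} [Semiring 𝕜] [PartialOrder 𝕜]
    [AddCommMonoid E] [Module 𝕜 E] [LinearOrder ι] {t : Set ι} {s : ι → Set E}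
    (hs : MonotoneOn s t) (hc : ∀ i ∈ t, Convex 𝕜 (s i)) :
    Convex 𝕜 (⋃ i ∈ t, s i) := by
  rw [biUnion_eq_iUnion]
  refine Directed.convex_iUnion (fun i j => ?_) fun i => hc i i.2
  rcases le_total i j with h | h
  · exact ⟨j, hs i.2 j.2 h, subset_rfl⟩
  · exact ⟨i, subset_rfl, hs j.2 i.2 h⟩

theorem continuousOn_ciInf_fintype {ι X L : Type*} [Fintype ι] [TopologicalSpace X]
    [ConditionallyCompleteLattice L] [TopologicalSpace L] [ContinuousInf L] {s : Set X}
    {f : ι → X → L} (hf : ∀ i, ContinuousOn (f i) s) :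
    ContinuousOn (fun x => ⨅ i, f i x) s := by
  cases isEmpty_or_nonempty ι
  · simp only [iInf_of_isEmpty]
    exact continuousOn_const
  · simpa only [← Finset.inf'_univ_eq_ciInf] using
      ContinuousOn.finset_inf'_apply univ_nonempty fun i _ => hf i

theorem mul_mul_div_one_add_le_rescale {a b c x s P : ℝ} (ha : 0 ≤ a) (hb : 0 ≤ b)
    (hc : 0 ≤ c) (hx : 0 ≤ x) (hxs : x ≤ s) (hsP : s ≤ P) :
    a * x * b / (1 + c * s) ≤ a * (P / s * x) * b / (1 + c * P) := by
  rcases hx.trans hxs |>.eq_or_lt with rfl | hs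
  · simp [le_antisymm hxs hx]
  have hP : 0 < P := hs.trans_le hsP
  rw [div_le_div_iff₀ (by positivity) (by positivity)]
  have key : x * (1 + c * P) ≤ P / s * x * (1 + c * s) := by
    rw [div_mul_eq_mul_div, div_mul_eq_mul_div, le_div_iff₀ hs]
    nlinarith [mul_nonneg hx (sub_nonneg.2 hsP)]
  calc a * x * b * (1 + c * P) = a * b * (x * (1 + c * P)) := by ring
    _ ≤ a * b * (P / s * x * (1 + c * s)) := by gcongr
    _ = a * (P / s * x) * b * (1 + c * s) := by ring

theorem one_sub_div_natCast_nonneg {a : ℝ} {T : ℕ} (h : a ≤ T) : 0 ≤ 1 - a / T :=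
  sub_nonneg.2 (div_le_one_of_le₀ h (Nat.cast_nonneg T))

theorem sum_smul_inv_sum_smul {ι : Type*} [Fintype ι] {x : ι → ℝ} (hx : ∀ i, 0 ≤ x i) :
    (∑ i, x i) • (∑ i, x i)⁻¹ • x = x := by
  rcases eq_or_ne (∑ i, x i) 0 with h | h
  · funext i
    simp [(sum_eq_zero_iff_of_nonneg fun i _ => hx i).1 h i]
  · exact smul_inv_smul₀ h x

section Sinr

variable {U G : ℕ} {K : Fin G → ℕ} (N : ℕ)

-- The pilot energies `e = τ q^up` and the total downlink power `S` are separate arguments so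
-- that they can be varied independently of `τ` and of the individual powers.
def mcSinr (η e : ∀ j : Fin G, Fin (K j) → ℝ) (q : Fin G → ℝ) (S : ℝ) (j : Fin G)
    (k : Fin (K j)) : ℝ :=
  N * q j * (e j k * η j k ^ 2 / (1 + ∑ t, e j t * η j t)) / (1 + η j k * S)

def mcRate (η e : ∀ j : Fin G, Fin (K j) → ℝ) (q : Fin G → ℝ) (S : ℝ) : ℝ :=
  Real.logb 2 (1 + ⨅ j, ⨅ k, mcSinr N η e q S j k)

def ucSinr (β f p : Fin U → ℝ) (S : ℝ) (m : Fin U) : ℝ :=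
  N * p m * (f m * β m ^ 2 / (1 + f m * β m)) / (1 + β m * S)

def ucRate (β α f p : Fin U → ℝ) (S : ℝ) : ℝ :=
  ∑ m, α m * Real.logb 2 (1 + ucSinr N β f p S m)

theorem OmuX_eq_mcRate (T : ℕ) (η : ∀ j : Fin G, Fin (K j) → ℝ) (τ : ℕ)
    (qup : ∀ j : Fin G, Fin (K j) → ℝ) (qdl : Fin G → ℝ) (pdl : Fin U → ℝ) :
    OmuX N T η τ qup qdl pdl = (1 - (τ : ℝ) / T) *
      mcRate N η (fun j k => τ * qup j k) qdl (∑ m, pdl m + ∑ i, qdl i) := rfl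

theorem OunX_eq_ucRate (T : ℕ) (β α : Fin U → ℝ) (τ : ℕ) (pup pdl : Fin U → ℝ)
    (qdl : Fin G → ℝ) :
    OunX N T β α τ pup pdl qdl = (1 - (τ : ℝ) / T) *
      ucRate N β α (fun m => τ * pup m) pdl (∑ u, pdl u + ∑ j, qdl j) := rfl

variable {N}

section Multicast

variable {η e : ∀ j : Fin G, Fin (K j) → ℝ} {q : Fin G → ℝ} {S P : ℝ}

theorem one_add_sum_mul_pos (hη : ∀ j k, 0 ≤ η j k) (he : ∀ j k, 0 ≤ e j k) (j : Fin G) :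
    0 < 1 + ∑ t, e j t * η j t := by
  have : 0 ≤ ∑ t, e j t * η j t := sum_nonneg fun t _ => mul_nonneg (he j t) (hη j t)
  linarith

theorem mcSinr_nonneg (hη : ∀ j k, 0 ≤ η j k) (he : ∀ j k, 0 ≤ e j k)
    (hq : ∀ j, 0 ≤ q j) (hS : 0 ≤ S) (j : Fin G) (k : Fin (K j)) :
    0 ≤ mcSinr N η e q S j k := by
  have := one_add_sum_mul_pos hη he j
  have := he j k; have := hq j; have := hη j k
  unfold mcSinr
  positivity

theorem mcSinr_smul (Δ : ℝ) (j : Fin G) (k : Fin (K j)) :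
    mcSinr N η e (Δ • q) S j k = Δ * mcSinr N η e q S j k := by
  simp only [mcSinr, Pi.smul_apply, smul_eq_mul]
  ring

theorem mcRate_smul {Δ : ℝ} (hΔ : 0 ≤ Δ) :
    mcRate N η e (Δ • q) S = Real.logb 2 (1 + Δ * ⨅ j, ⨅ k, mcSinr N η e q S j k) := by
  simp only [mcRate, mcSinr_smul, Real.mul_iInf_of_nonneg hΔ]

theorem mcSinr_le_of_le (hη : ∀ j k, 0 ≤ η j k) (he : ∀ j k, 0 ≤ e j k)
    (hq : ∀ j, 0 ≤ q j) (hS : 0 ≤ S) (hSP : S ≤ P) (j : Fin G) (k : Fin (K j)) :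
    mcSinr N η e q P j k ≤ mcSinr N η e q S j k := by
  have := one_add_sum_mul_pos hη he j
  have := he j k; have := hq j; have := hη j k
  unfold mcSinr
  gcongr

theorem mcSinr_le_rescale (hη : ∀ j k, 0 ≤ η j k) (he : ∀ j k, 0 ≤ e j k) {j : Fin G}
    (hq : 0 ≤ q j) (hqS : q j ≤ S) (hSP : S ≤ P) (k : Fin (K j)) :
    mcSinr N η e q S j k ≤ mcSinr N η e ((P / S) • q) P j k :=
  mul_mul_div_one_add_le_rescale (Nat.cast_nonneg N)
    (div_nonneg (mul_nonneg (he j k) (sq_nonneg _)) (one_add_sum_mul_pos hη he j).le)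
    (hη j k) hq hqS hSP

theorem mcRate_nonneg (h : ∀ j k, 0 ≤ mcSinr N η e q S j k) : 0 ≤ mcRate N η e q S :=
  Real.logb_nonneg one_lt_two
    (le_add_of_nonneg_right (Real.iInf_nonneg fun j => Real.iInf_nonneg (h j)))

theorem mcRate_mono {e' : ∀ j : Fin G, Fin (K j) → ℝ} {q' : Fin G → ℝ} {S' : ℝ}
    (h0 : ∀ j k, 0 ≤ mcSinr N η e q S j k)
    (h : ∀ j k, mcSinr N η e q S j k ≤ mcSinr N η e' q' S' j k) :
    mcRate N η e q S ≤ mcRate N η e' q' S' :=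
  Real.logb_le_logb_of_le one_lt_two
    (by linarith [Real.iInf_nonneg fun j => Real.iInf_nonneg (h0 j)])
    ((add_le_add_iff_left 1).2 (ciInf_mono (Finite.bddBelow_range _) fun j =>
      ciInf_mono (Finite.bddBelow_range _) (h j)))

theorem mcRate_zero_smul : mcRate N η ((0 : ℝ) • e) q S = 0 := by
  simp [mcRate, mcSinr]

theorem continuousOn_mcRate_smul (hη : ∀ j k, 0 ≤ η j k) (he : ∀ j k, 0 ≤ e j k)
    (hq : ∀ j, 0 ≤ q j) (hS : 0 ≤ S) :
    ContinuousOn (fun μ : ℝ => mcRate N η (μ • e) q S) (Ici 0) := by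
  have hsmul : ∀ μ ∈ Ici (0 : ℝ), ∀ j k, 0 ≤ (μ • e) j k := fun μ hμ j k =>
    mul_nonneg hμ (he j k)
  have hsinr : ∀ j k, ContinuousOn (fun μ : ℝ => mcSinr N η (μ • e) q S j k) (Ici 0) := by
    intro j k
    refine ContinuousOn.div_const (continuousOn_const.mul (ContinuousOn.div (by fun_prop)
      (by fun_prop) fun μ hμ => (one_add_sum_mul_pos hη (hsmul μ hμ) j).ne')) _
  refine ContinuousOn.logb (continuousOn_const.add (continuousOn_ciInf_fintype fun j =>
    continuousOn_ciInf_fintype (hsinr j))) fun μ hμ => ?_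
  have := Real.iInf_nonneg fun j => Real.iInf_nonneg
    (mcSinr_nonneg (N := N) hη (hsmul μ hμ) hq hS j)
  positivity

theorem mcRate_le_of_le (hη : ∀ j k, 0 ≤ η j k) (he : ∀ j k, 0 ≤ e j k)
    (hq : ∀ j, 0 ≤ q j) (hS : 0 ≤ S) (hSP : S ≤ P) :
    mcRate N η e q P ≤ mcRate N η e q S :=
  mcRate_mono (mcSinr_nonneg hη he hq (hS.trans hSP)) (mcSinr_le_of_le hη he hq hS hSP)

theorem mcRate_le_rescale (hη : ∀ j k, 0 ≤ η j k) (he : ∀ j k, 0 ≤ e j k)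
    (hq : ∀ j, 0 ≤ q j) (hqS : ∀ j, q j ≤ S) (hS : 0 ≤ S) (hSP : S ≤ P) :
    mcRate N η e q S ≤ mcRate N η e ((P / S) • q) P :=
  mcRate_mono (mcSinr_nonneg hη he hq hS) fun j k =>
    mcSinr_le_rescale hη he (hq j) (hqS j) hSP k

theorem exists_mcRate_smul_eq (hη : ∀ j k, 0 ≤ η j k) (he : ∀ j k, 0 ≤ e j k)
    (hq : ∀ j, 0 ≤ q j) (hS : 0 ≤ S) {c t : ℝ} (ht0 : 0 ≤ t)
    (ht : t ≤ c * mcRate N η e q S) :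
    ∃ μ ∈ Icc (0 : ℝ) 1, c * mcRate N η (μ • e) q S = t :=
  intermediate_value_Icc (f := fun μ => c * mcRate N η (μ • e) q S) zero_le_one
    (continuousOn_const.mul ((continuousOn_mcRate_smul hη he hq hS).mono Icc_subset_Ici_self))
    ⟨by simpa only [mcRate_zero_smul, mul_zero] using ht0, by simpa only [one_smul] using ht⟩

end Multicast

section Unicast

variable {β α f p : Fin U → ℝ} {S P : ℝ}

theorem ucSinr_nonneg (hβ : ∀ m, 0 ≤ β m) (hf : ∀ m, 0 ≤ f m) (hp : ∀ m, 0 ≤ p m)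
    (hS : 0 ≤ S) (m : Fin U) : 0 ≤ ucSinr N β f p S m := by
  have := hβ m; have := hf m; have := hp m
  unfold ucSinr
  positivity

theorem ucSinr_le_of_le {f' : Fin U → ℝ} {S' : ℝ} (hβ : ∀ m, 0 ≤ β m) {m : Fin U}
    (hf : 0 ≤ f m) (hff' : f m ≤ f' m) (hp : 0 ≤ p m) (hS' : 0 ≤ S') (hS'S : S' ≤ S) :
    ucSinr N β f p S m ≤ ucSinr N β f' p S' m := by
  have := hβ m
  have hθ : f m * β m ^ 2 / (1 + f m * β m) ≤ f' m * β m ^ 2 / (1 + f' m * β m) := by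
    rw [div_le_div_iff₀ (by positivity) (by nlinarith)]
    nlinarith [mul_nonneg (sub_nonneg.2 hff') (sq_nonneg (β m))]
  have := hf.trans hff'
  unfold ucSinr
  gcongr

theorem ucSinr_le_rescale (hβ : ∀ m, 0 ≤ β m) (hf : ∀ m, 0 ≤ f m) {m : Fin U}
    (hp : 0 ≤ p m) (hpS : p m ≤ S) (hSP : S ≤ P) :
    ucSinr N β f p S m ≤ ucSinr N β f ((P / S) • p) P m := by
  have := hβ m; have := hf m
  exact mul_mul_div_one_add_le_rescale (Nat.cast_nonneg N) (by positivity) (hβ m) hp hpS hSP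

theorem ucRate_nonneg (hα : ∀ m, 0 ≤ α m) (h : ∀ m, 0 ≤ ucSinr N β f p S m) :
    0 ≤ ucRate N β α f p S :=
  sum_nonneg fun m _ => mul_nonneg (hα m)
    (Real.logb_nonneg one_lt_two (le_add_of_nonneg_right (h m)))

theorem ucRate_mono {f' p' : Fin U → ℝ} {S' : ℝ} (hα : ∀ m, 0 ≤ α m)
    (h0 : ∀ m, 0 ≤ ucSinr N β f p S m)
    (h : ∀ m, ucSinr N β f p S m ≤ ucSinr N β f' p' S' m) :
    ucRate N β α f p S ≤ ucRate N β α f' p' S' :=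
  sum_le_sum fun m _ => mul_le_mul_of_nonneg_left
    (Real.logb_le_logb_of_le one_lt_two (by linarith [h0 m]) (by linarith [h m])) (hα m)

theorem ucRate_zero_smul : ucRate N β α ((0 : ℝ) • f) p S = 0 := by
  simp [ucRate, ucSinr]

theorem continuousOn_ucRate_smul (hβ : ∀ m, 0 ≤ β m) (hf : ∀ m, 0 ≤ f m)
    (hp : ∀ m, 0 ≤ p m) (hS : 0 ≤ S) :
    ContinuousOn (fun ν : ℝ => ucRate N β α (ν • f) p S) (Ici 0) := by
  have hsmul : ∀ ν ∈ Ici (0 : ℝ), ∀ m, 0 ≤ (ν • f) m := fun ν hν m =>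
    mul_nonneg hν (hf m)
  refine continuousOn_finsetSum _ fun m _ => continuousOn_const.mul
    (ContinuousOn.logb (continuousOn_const.add ?_) fun ν hν => ?_)
  · refine ContinuousOn.div_const (continuousOn_const.mul (ContinuousOn.div (by fun_prop)
      (by fun_prop) fun ν hν => ?_)) _
    have := mul_nonneg (hsmul ν hν m) (hβ m)
    simp only [Pi.smul_apply, smul_eq_mul] at this ⊢
    positivity
  · have := ucSinr_nonneg (N := N) hβ (hsmul ν hν) hp hS m
    positivity

theorem concaveOn_ucRate (hβ : ∀ m, 0 ≤ β m) (hα : ∀ m, 0 ≤ α m) (hf : ∀ m, 0 ≤ f m)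
    (hS : 0 ≤ S) : ConcaveOn ℝ (Ici 0) fun p => ucRate N β α f p S := by
  refine ⟨convex_Ici 0, fun p hp p' hp' a b ha hb hab => ?_⟩
  simp only [ucRate, smul_eq_mul, mul_sum, ← sum_add_distrib]
  refine sum_le_sum fun m _ => ?_
  have hlin : ucSinr N β f (a • p + b • p') S m =
      a * ucSinr N β f p S m + b * ucSinr N β f p' S m := by
    simp only [ucSinr, Pi.add_apply, Pi.smul_apply, smul_eq_mul]
    ring
  have hlog := (concaveOn_logb_one_add one_lt_two).2 (ucSinr_nonneg (N := N) hβ hf hp hS m)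
    (ucSinr_nonneg (N := N) hβ hf hp' hS m) ha hb hab
  simp only [smul_eq_mul] at hlog
  rw [hlin]
  calc a * (α m * Real.logb 2 (1 + ucSinr N β f p S m)) +
        b * (α m * Real.logb 2 (1 + ucSinr N β f p' S m))
      = α m * (a * Real.logb 2 (1 + ucSinr N β f p S m) +
        b * Real.logb 2 (1 + ucSinr N β f p' S m)) := by ring
    _ ≤ α m * Real.logb 2 (1 + (a * ucSinr N β f p S m + b * ucSinr N β f p' S m)) :=
      mul_le_mul_of_nonneg_left hlog (hα m)

theorem ucRate_le_of_le (hβ : ∀ m, 0 ≤ β m) (hα : ∀ m, 0 ≤ α m) (hf : ∀ m, 0 ≤ f m)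
    (hp : ∀ m, 0 ≤ p m) (hS : 0 ≤ S) (hSP : S ≤ P) :
    ucRate N β α f p P ≤ ucRate N β α f p S :=
  ucRate_mono hα (ucSinr_nonneg hβ hf hp (hS.trans hSP)) fun m =>
    ucSinr_le_of_le hβ (hf m) le_rfl (hp m) hS hSP

theorem ucRate_le_rescale {f' : Fin U → ℝ} (hβ : ∀ m, 0 ≤ β m) (hα : ∀ m, 0 ≤ α m)
    (hf : ∀ m, 0 ≤ f m) (hff' : ∀ m, f m ≤ f' m) (hp : ∀ m, 0 ≤ p m)
    (hpS : ∀ m, p m ≤ S) (hS : 0 ≤ S) (hSP : S ≤ P) :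
    ucRate N β α f p S ≤ ucRate N β α f' ((P / S) • p) P :=
  ucRate_mono hα (ucSinr_nonneg hβ hf hp hS) fun m =>
    (ucSinr_le_of_le hβ (hf m) (hff' m) (hp m) hS le_rfl).trans
      (ucSinr_le_rescale hβ (fun m => (hf m).trans (hff' m)) (hp m) (hpS m) hSP)

theorem exists_ucRate_smul_eq (hβ : ∀ m, 0 ≤ β m) (hf : ∀ m, 0 ≤ f m)
    (hp : ∀ m, 0 ≤ p m) (hS : 0 ≤ S) {c t : ℝ} (ht0 : 0 ≤ t)
    (ht : t ≤ c * ucRate N β α f p S) :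
    ∃ ν ∈ Icc (0 : ℝ) 1, c * ucRate N β α (ν • f) p S = t :=
  intermediate_value_Icc (f := fun ν => c * ucRate N β α (ν • f) p S) zero_le_one
    (continuousOn_const.mul ((continuousOn_ucRate_smul hβ hf hp hS).mono Icc_subset_Ici_self))
    ⟨by simpa only [ucRate_zero_smul, mul_zero] using ht0, by simpa only [one_smul] using ht⟩

end Unicast

end Sinr

section Region

variable {U G : ℕ} {K : Fin G → ℕ}

def powerBudget (U : ℕ) (P : ℝ) : Set (ℝ × (Fin U → ℝ)) :=
  {x | 0 ≤ x.1 ∧ (∀ m, 0 ≤ x.2 m) ∧ ∑ m, x.2 m + x.1 ≤ P}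

theorem convex_powerBudget (P : ℝ) : Convex ℝ (powerBudget U P) := by
  rintro x ⟨hx1, hx2, hxP⟩ y ⟨hy1, hy2, hyP⟩ a b ha hb hab
  simp only [powerBudget, mem_ofPred_eq, Prod.fst_add, Prod.snd_add, Prod.smul_fst,
    Prod.smul_snd, Pi.add_apply, Pi.smul_apply, smul_eq_mul, sum_add_distrib, ← mul_sum]
  refine ⟨by positivity, fun m => add_nonneg (mul_nonneg ha (hx2 m)) (mul_nonneg hb (hy2 m)),
    ?_⟩
  have hsplit : a * P + b * P = P := by rw [← add_mul, hab, one_mul]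
  nlinarith [mul_le_mul_of_nonneg_left hxP ha, mul_le_mul_of_nonneg_left hyP hb]

def mcUnitGains (N : ℕ) (η Emu : ∀ j : Fin G, Fin (K j) → ℝ) (P : ℝ) : Set ℝ :=
  {γ | ∃ q e, (∀ j, 0 ≤ q j) ∧ ∑ j, q j ≤ 1 ∧
    (∀ j k, 0 ≤ e j k ∧ e j k ≤ Emu j k) ∧ γ = ⨅ j, ⨅ k, mcSinr N η e q P j k}

def rateBound (N : ℕ) (c P : ℝ) (β α Eun : Fin U → ℝ) (γ : ℝ)
    (x : ℝ × (Fin U → ℝ)) : ℝ × ℝ :=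
  (c * Real.logb 2 (1 + x.1 * γ), c * ucRate N β α Eun x.2 P)

def rateRegion (N T : ℕ) (P : ℝ) (η Emu : ∀ j : Fin G, Fin (K j) → ℝ)
    (β Eun α : Fin U → ℝ) : Set (ℝ × ℝ) :=
  ⋃ γ ∈ mcUnitGains N η Emu P, ⋃ x ∈ powerBudget U P,
    Icc 0 (rateBound N (1 - (U + G : ℝ) / T) P β α Eun γ x)

variable {N T : ℕ} {P c γ : ℝ} {η Emu : ∀ j : Fin G, Fin (K j) → ℝ}
  {β Eun α : Fin U → ℝ}

theorem nonneg_of_mem_mcUnitGains (hη : ∀ j k, 0 ≤ η j k) (hP : 0 ≤ P)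
    (hγ : γ ∈ mcUnitGains N η Emu P) : 0 ≤ γ := by
  obtain ⟨q, e, hq, -, he, rfl⟩ := hγ
  exact Real.iInf_nonneg fun j => Real.iInf_nonneg
    (mcSinr_nonneg hη (fun j k => (he j k).1) hq hP j)

theorem rateBound_mono (hc : 0 ≤ c) (hγ : 0 ≤ γ) {γ' : ℝ} (hγγ' : γ ≤ γ')
    {x : ℝ × (Fin U → ℝ)} (hx : 0 ≤ x.1) :
    rateBound N c P β α Eun γ x ≤ rateBound N c P β α Eun γ' x := by
  refine Prod.mk_le_mk.2 ⟨mul_le_mul_of_nonneg_left ?_ hc, le_rfl⟩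
  exact Real.logb_le_logb_of_le one_lt_two (by positivity) (by gcongr)

theorem concaveOn_rateBound (hc : 0 ≤ c) (hP : 0 ≤ P) (hγ : 0 ≤ γ) (hβ : ∀ m, 0 ≤ β m)
    (hα : ∀ m, 0 ≤ α m) (hEun : ∀ m, 0 ≤ Eun m) :
    ConcaveOn ℝ (powerBudget U P) (rateBound N c P β α Eun γ) := by
  have hmc := (concaveOn_logb_one_add one_lt_two).comp_linearMap
    ((LinearMap.fst ℝ ℝ (Fin U → ℝ)).smulRight γ)
  have huc := (concaveOn_ucRate (N := N) hβ hα hEun hP).comp_linearMap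
    (LinearMap.snd ℝ ℝ (Fin U → ℝ))
  exact ConcaveOn.prodMk
    ((hmc.subset (fun x hx => mul_nonneg hx.1 hγ) (convex_powerBudget P)).smul hc)
    ((huc.subset (fun x hx => hx.2.1) (convex_powerBudget P)).smul hc)

theorem convex_rateRegion (hT : U + G ≤ T) (hP : 0 ≤ P) (hη : ∀ j k, 0 ≤ η j k)
    (hβ : ∀ m, 0 ≤ β m) (hα : ∀ m, 0 ≤ α m) (hEun : ∀ m, 0 ≤ Eun m) :
    Convex ℝ (rateRegion N T P η Emu β Eun α) := by
  have hc := one_sub_div_natCast_nonneg (T := T) (a := U + G) (by exact_mod_cast hT)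
  have hγ : ∀ γ ∈ mcUnitGains N η Emu P, 0 ≤ γ := fun γ =>
    nonneg_of_mem_mcUnitGains hη hP
  refine MonotoneOn.convex_biUnion (fun γ hγ' γ' _ hγγ' => ?_) fun γ hγ' =>
    (concaveOn_rateBound hc hP (hγ γ hγ') hβ hα hEun).convex_biUnion_Icc
  exact iUnion₂_mono fun x hx => Icc_subset_Icc_right
    (rateBound_mono hc (hγ γ hγ') hγγ' hx.1)

theorem attainS_subset_rateRegion (hη : ∀ j k, 0 ≤ η j k) (hβ : ∀ m, 0 ≤ β m)
    (hα : ∀ m, 0 ≤ α m) :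
    attainS N T P η Emu β Eun α ⊆ rateRegion N T P η Emu β Eun α := by
  rintro _ ⟨τ, qup, qdl, pup, pdl, ⟨hτ, hτT, hqdl, hpdl, hqup, hpup, hSP⟩, rfl⟩
  rw [OmuX_eq_mcRate, OunX_eq_ucRate]
  set e : ∀ j : Fin G, Fin (K j) → ℝ := fun j k => τ * qup j k
  set f : Fin U → ℝ := fun m => τ * pup m
  set Q := ∑ j, qdl j
  set S := ∑ m, pdl m + Q
  have he : ∀ j k, 0 ≤ e j k := fun j k => mul_nonneg (Nat.cast_nonneg τ) (hqup j k).1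
  have hf : ∀ m, 0 ≤ f m := fun m => mul_nonneg (Nat.cast_nonneg τ) (hpup m).1
  have hP : 0 ≤ ∑ m, pdl m := sum_nonneg fun m _ => hpdl m
  have hQ : 0 ≤ Q := sum_nonneg fun j _ => hqdl j
  have hS : 0 ≤ S := add_nonneg hP hQ
  have hr : 0 ≤ P / S := div_nonneg (hS.trans hSP) hS
  have hcτ : 0 ≤ 1 - (τ : ℝ) / T := one_sub_div_natCast_nonneg (by exact_mod_cast hτT)
  have hcc : 1 - (τ : ℝ) / T ≤ 1 - (U + G : ℝ) / T := by
    gcongr; exact_mod_cast hτ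
  have hmc0 := mcRate_nonneg (N := N) (mcSinr_nonneg hη he hqdl hS)
  have huc0 := ucRate_nonneg (N := N) hα (ucSinr_nonneg hβ hf hpdl hS)
  have hmc : mcRate N η e qdl S ≤
      Real.logb 2 (1 + P / S * Q * ⨅ j, ⨅ k, mcSinr N η e (Q⁻¹ • qdl) P j k) := by
    rw [← mcRate_smul (mul_nonneg hr hQ), mul_smul, sum_smul_inv_sum_smul hqdl]
    exact mcRate_le_rescale hη he hqdl (fun j => le_add_of_nonneg_of_le hP
      (single_le_sum (fun i _ => hqdl i) (mem_univ j))) hS hSP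
  have huc := ucRate_le_rescale (N := N) hβ hα hf (fun m => (hpup m).2) hpdl
    (fun m => le_add_of_le_of_nonneg (single_le_sum (fun i _ => hpdl i) (mem_univ m)) hQ) hS hSP
  refine mem_iUnion₂.2 ⟨_, ⟨Q⁻¹ • qdl, e, fun j => mul_nonneg (inv_nonneg.2 hQ) (hqdl j),
    ?_, fun j k => ⟨he j k, (hqup j k).2⟩, rfl⟩,
    mem_iUnion₂.2 ⟨(P / S * Q, (P / S) • pdl),
    ⟨mul_nonneg hr hQ, fun m => mul_nonneg hr (hpdl m), ?_⟩, ?_, ?_⟩⟩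
  · simp only [Pi.smul_apply, smul_eq_mul, ← mul_sum]
    exact inv_mul_le_one_of_le₀ le_rfl hQ
  · simp only [Pi.smul_apply, smul_eq_mul, ← mul_sum, ← mul_add]
    rcases eq_or_ne S 0 with h | h
    · rw [h, div_zero, zero_mul]
      exact hS.trans hSP
    · exact (div_mul_cancel₀ P h).le
  · exact Prod.mk_le_mk.2 ⟨mul_nonneg hcτ hmc0, mul_nonneg hcτ huc0⟩
  · exact Prod.mk_le_mk.2 ⟨mul_le_mul hcc hmc hmc0 (hcτ.trans hcc),
      mul_le_mul hcc huc huc0 (hcτ.trans hcc)⟩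

theorem mem_attainS_of_le (hT : U + G ≤ T) (hη : ∀ j k, 0 ≤ η j k) (hβ : ∀ m, 0 ≤ β m)
    (hEun : ∀ m, 0 ≤ Eun m) {e : ∀ j : Fin G, Fin (K j) → ℝ}
    (he : ∀ j k, 0 ≤ e j k ∧ e j k ≤ Emu j k) {qdl : Fin G → ℝ} {p : Fin U → ℝ}
    (hqdl : ∀ j, 0 ≤ qdl j) (hp : ∀ m, 0 ≤ p m) (hSP : ∑ m, p m + ∑ j, qdl j ≤ P)
    {y : ℝ × ℝ} (hy0 : 0 ≤ y)
    (hy1 : y.1 ≤ (1 - (U + G : ℝ) / T) * mcRate N η e qdl (∑ m, p m + ∑ j, qdl j))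
    (hy2 : y.2 ≤ (1 - (U + G : ℝ) / T) * ucRate N β α Eun p (∑ m, p m + ∑ j, qdl j)) :
    y ∈ attainS N T P η Emu β Eun α := by
  have hS : 0 ≤ ∑ m, p m + ∑ j, qdl j :=
    add_nonneg (sum_nonneg fun m _ => hp m) (sum_nonneg fun j _ => hqdl j)
  obtain ⟨μ, hμ, hμy⟩ := exists_mcRate_smul_eq hη (fun j k => (he j k).1) hqdl hS
    (Prod.le_def.1 hy0).1 hy1
  obtain ⟨ν, hν, hνy⟩ := exists_ucRate_smul_eq hβ hEun hp hS (Prod.le_def.1 hy0).2 hy2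
  have hτ : ∀ x : ℝ, 0 < U + G → ((U + G : ℕ) : ℝ) * (x / (U + G : ℕ)) = x :=
    fun x h => mul_div_cancel₀ x (by positivity)
  have hτe : (fun j k => ((U + G : ℕ) : ℝ) * (μ * e j k / (U + G : ℕ))) = μ • e := by
    funext j k
    exact hτ _ (by have := j.pos; omega)
  have hτf : (fun m => ((U + G : ℕ) : ℝ) * (ν * Eun m / (U + G : ℕ))) = ν • Eun := by
    funext m
    exact hτ _ (by have := m.pos; omega)
  refine ⟨U + G, fun j k => μ * e j k / (U + G : ℕ), qdl,
    fun m => ν * Eun m / (U + G : ℕ), p,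
    ⟨le_rfl, hT, hqdl, hp, fun j k => ⟨?_, ?_⟩, fun m => ⟨?_, ?_⟩, hSP⟩, ?_⟩
  · exact div_nonneg (mul_nonneg hμ.1 (he j k).1) (Nat.cast_nonneg _)
  · rw [congrFun (congrFun hτe j) k]
    exact (mul_le_of_le_one_left (he j k).1 hμ.2).trans (he j k).2
  · exact div_nonneg (mul_nonneg hν.1 (hEun m)) (Nat.cast_nonneg _)
  · rw [congrFun hτf m]
    exact mul_le_of_le_one_left (hEun m) hν.2
  · rw [OmuX_eq_mcRate, OunX_eq_ucRate, hτe, hτf, Nat.cast_add]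
    exact Prod.ext hμy.symm hνy.symm

theorem rateRegion_subset_attainS (hT : U + G ≤ T) (hη : ∀ j k, 0 ≤ η j k)
    (hβ : ∀ m, 0 ≤ β m) (hα : ∀ m, 0 ≤ α m) (hEun : ∀ m, 0 ≤ Eun m) :
    rateRegion N T P η Emu β Eun α ⊆ attainS N T P η Emu β Eun α := by
  intro y hy
  simp only [rateRegion, mem_iUnion₂] at hy
  obtain ⟨_, ⟨q, e, hq, hq1, he, rfl⟩, ⟨Δ, p⟩, ⟨hΔ, hp, hΔP⟩, hy0, hy⟩ := hy
  dsimp only at hΔ hp hΔP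
  have hqdl : ∀ j, 0 ≤ (Δ • q) j := fun j => mul_nonneg hΔ (hq j)
  have hS : 0 ≤ ∑ m, p m + ∑ j, (Δ • q) j :=
    add_nonneg (sum_nonneg fun m _ => hp m) (sum_nonneg fun j _ => hqdl j)
  have hSP : ∑ m, p m + ∑ j, (Δ • q) j ≤ P := by
    have : ∑ j, (Δ • q) j ≤ Δ := by
      simpa only [Pi.smul_apply, smul_eq_mul, ← mul_sum] using mul_le_of_le_one_right hΔ hq1
    linarith
  have hc := one_sub_div_natCast_nonneg (T := T) (a := U + G) (by exact_mod_cast hT)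
  refine mem_attainS_of_le hT hη hβ hEun he hqdl hp hSP hy0
    ((Prod.le_def.1 hy).1.trans (mul_le_mul_of_nonneg_left ?_ hc))
    ((Prod.le_def.1 hy).2.trans (mul_le_mul_of_nonneg_left ?_ hc))
  · rw [← mcRate_smul hΔ]
    exact mcRate_le_of_le hη (fun j k => (he j k).1) hqdl hS hSP
  · exact ucRate_le_of_le hβ hα hEun hp hS hSP

end Region

theorem moop_attainable_set_convex_general
    (U G : ℕ) (K : Fin G → ℕ)
    (N : ℕ) (T : ℕ) (hT : U + G ≤ T)
    (P : ℝ) (hP : 0 < P)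
    (η Emu : ∀ j : Fin G, Fin (K j) → ℝ) (β Eun α : Fin U → ℝ)
    (hη : ∀ j k, 0 < η j k)
    (hβ : ∀ m, 0 < β m) (hEun : ∀ m, 0 < Eun m) (hα : ∀ m, 0 < α m) :
    Convex ℝ (attainS N T P η Emu β Eun α) := by
  have hη' : ∀ j k, 0 ≤ η j k := fun j k => (hη j k).le
  have hβ' : ∀ m, 0 ≤ β m := fun m => (hβ m).le
  have hα' : ∀ m, 0 ≤ α m := fun m => (hα m).le
  have hEun' : ∀ m, 0 ≤ Eun m := fun m => (hEun m).le
  rw [(attainS_subset_rateRegion hη' hβ' hα').antisymm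
    (rateRegion_subset_attainS hT hη' hβ' hα' hEun')]
  exact convex_rateRegion hT hP.le hη' hβ' hα' hEun'

/-- Theorem 4 of the paper: the attainable objective set `S` of the
joint unicast and multigroup multicast multiobjective problem is convex. -/
theorem moop_attainable_set_convex
    (U G : ℕ) (hU : 1 ≤ U) (hG : 1 ≤ G) (K : Fin G → ℕ) (hK : ∀ j, 1 ≤ K j)
    (N : ℕ) (hN : 1 ≤ N) (T : ℕ) (hT : U + G ≤ T)
    (P : ℝ) (hP : 0 < P)
    (η Emu : ∀ j : Fin G, Fin (K j) → ℝ) (β Eun α : Fin U → ℝ)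
    (hη : ∀ j k, 0 < η j k) (hEmu : ∀ j k, 0 < Emu j k)
    (hβ : ∀ m, 0 < β m) (hEun : ∀ m, 0 < Eun m) (hα : ∀ m, 0 < α m) :
    Convex ℝ (attainS N T P η Emu β Eun α) :=
  moop_attainable_set_convex_general U G K N T hT P hP η Emu β Eun α hη hβ hEun hα
end
end

section
/- The attainable set S is downward comprehensive in the nonnegative orthant: if (a,b) ∈ S and a', b' are reals with 0 ≤ a' ≤ a and 0 ≤ b' ≤ b, then (a',b') ∈ S. -/
open Finset

noncomputable section

/-! Scaling the uplink pilot powers of one service by `s ∈ [0, 1]` keeps the resource bundle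
feasible, moves only that service's objective (the estimation qualities `ξ` resp. `θ` are the only
places where `q^{up}` resp. `p^{up}` enter), does so continuously, and brings it down to `0` at
`s = 0`. The intermediate value theorem then reaches every level between `0` and the original
value, independently for the two objectives. -/

theorem ContinuousOn.ciInf_apply {X L ι : Type*} [TopologicalSpace X]
    [ConditionallyCompleteLattice L] [TopologicalSpace L] [ContinuousInf L] [Finite ι]
    {f : ι → X → L} {t : Set X} (hf : ∀ i, ContinuousOn (f i) t) :
    ContinuousOn (fun x ↦ ⨅ i, f i x) t := by
  cases isEmpty_or_nonempty ι
  · simp only [iInf, Set.range_eq_empty]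
    exact continuousOn_const
  · have := Fintype.ofFinite ι
    simp only [← Finset.inf'_univ_eq_ciInf]
    exact ContinuousOn.finset_inf'_apply _ fun i _ ↦ hf i

theorem ContinuousOn.logb_one_add {X : Type*} [TopologicalSpace X] {g : X → ℝ} {t : Set X}
    (b : ℝ) (hg : ContinuousOn g t) (hg0 : ∀ x ∈ t, 0 ≤ g x) :
    ContinuousOn (fun x ↦ Real.logb b (1 + g x)) t :=
  (continuousOn_const.add hg).logb fun x hx ↦ (by linarith [hg0 x hx] : (0 : ℝ) < 1 + g x).ne'

section PilotScaling

variable {U G : ℕ} {K : Fin G → ℕ} (N T τ : ℕ) {η : ∀ j : Fin G, Fin (K j) → ℝ}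
  {β α : Fin U → ℝ} {qup : ∀ j : Fin G, Fin (K j) → ℝ} {pup pdl : Fin U → ℝ} {qdl : Fin G → ℝ}

theorem xiX_nonneg (hη : ∀ j k, 0 ≤ η j k) (hqup : ∀ j k, 0 ≤ qup j k) (j : Fin G)
    (k : Fin (K j)) : 0 ≤ xiX η τ qup j k := by
  unfold xiX
  have := hqup j k
  have : 0 ≤ ∑ t, (τ : ℝ) * qup j t * η j t :=
    Finset.sum_nonneg fun t _ ↦ mul_nonneg (mul_nonneg τ.cast_nonneg (hqup j t)) (hη j t)
  positivity

theorem thetaX_nonneg (hβ : ∀ m, 0 ≤ β m) (hpup : ∀ m, 0 ≤ pup m) (m : Fin U) :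
    0 ≤ thetaX β τ pup m := by
  unfold thetaX
  have := hβ m
  have := hpup m
  positivity

theorem continuousOn_xiX_smul (hη : ∀ j k, 0 ≤ η j k) (hqup : ∀ j k, 0 ≤ qup j k) (j : Fin G)
    (k : Fin (K j)) :
    ContinuousOn (fun s : ℝ ↦ xiX η τ (fun j k ↦ s * qup j k) j k) (Set.Ici 0) := by
  unfold xiX
  refine (by fun_prop : Continuous _).continuousOn.div (by fun_prop) fun s (hs : 0 ≤ s) ↦ ?_
  have : 0 ≤ ∑ t, (τ : ℝ) * (s * qup j t) * η j t := Finset.sum_nonneg fun t _ ↦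
    mul_nonneg (mul_nonneg τ.cast_nonneg (mul_nonneg hs (hqup j t))) (hη j t)
  positivity

theorem continuousOn_thetaX_smul (hβ : ∀ m, 0 ≤ β m) (hpup : ∀ m, 0 ≤ pup m) (m : Fin U) :
    ContinuousOn (fun s : ℝ ↦ thetaX β τ (fun m ↦ s * pup m) m) (Set.Ici 0) := by
  unfold thetaX
  refine (by fun_prop : Continuous _).continuousOn.div (by fun_prop) fun s (hs : 0 ≤ s) ↦ ?_
  have := hβ m
  have := hpup m
  positivity

theorem continuousOn_OmuX_smul (hη : ∀ j k, 0 ≤ η j k) (hqup : ∀ j k, 0 ≤ qup j k)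
    (hqdl : ∀ j, 0 ≤ qdl j) (hpdl : ∀ m, 0 ≤ pdl m) :
    ContinuousOn (fun s : ℝ ↦ OmuX N T η τ (fun j k ↦ s * qup j k) qdl pdl) (Set.Ici 0) := by
  have hload : 0 ≤ ∑ m, pdl m + ∑ i, qdl i :=
    add_nonneg (Finset.sum_nonneg fun m _ ↦ hpdl m) (Finset.sum_nonneg fun i _ ↦ hqdl i)
  refine continuousOn_const.mul <| .logb_one_add 2
    (.ciInf_apply fun j ↦ .ciInf_apply fun k ↦
      (continuousOn_const.mul (continuousOn_xiX_smul τ hη hqup j k)).div_const _)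
    fun s (hs : 0 ≤ s) ↦ Real.iInf_nonneg fun j ↦ Real.iInf_nonneg fun k ↦ ?_
  have := xiX_nonneg τ hη (fun j k ↦ mul_nonneg hs (hqup j k)) j k
  have := hqdl j
  have := hη j k
  positivity

theorem continuousOn_OunX_smul (hβ : ∀ m, 0 ≤ β m) (hpup : ∀ m, 0 ≤ pup m)
    (hqdl : ∀ j, 0 ≤ qdl j) (hpdl : ∀ m, 0 ≤ pdl m) :
    ContinuousOn (fun t : ℝ ↦ OunX N T β α τ (fun m ↦ t * pup m) pdl qdl) (Set.Ici 0) := by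
  have hload : 0 ≤ ∑ u, pdl u + ∑ j, qdl j :=
    add_nonneg (Finset.sum_nonneg fun m _ ↦ hpdl m) (Finset.sum_nonneg fun i _ ↦ hqdl i)
  refine continuousOn_const.mul <| continuousOn_finsetSum _ fun m _ ↦
    continuousOn_const.mul <| .logb_one_add 2
      ((continuousOn_const.mul (continuousOn_thetaX_smul τ hβ hpup m)).div_const _)
      fun t (ht : 0 ≤ t) ↦ ?_
  have := thetaX_nonneg τ hβ (fun m ↦ mul_nonneg ht (hpup m)) m
  have := hpdl m
  have := hβ m
  positivity

theorem exists_pilot_scale_OmuX_eq (hη : ∀ j k, 0 ≤ η j k) (hqup : ∀ j k, 0 ≤ qup j k)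
    (hqdl : ∀ j, 0 ≤ qdl j) (hpdl : ∀ m, 0 ≤ pdl m)
    {a : ℝ} (ha0 : 0 ≤ a) (ha : a ≤ OmuX N T η τ qup qdl pdl) :
    ∃ s ∈ Set.Icc (0 : ℝ) 1, OmuX N T η τ (fun j k ↦ s * qup j k) qdl pdl = a := by
  have h0 : OmuX N T η τ (fun j k ↦ 0 * qup j k) qdl pdl = 0 := by simp [OmuX, xiX]
  have h1 : OmuX N T η τ (fun j k ↦ 1 * qup j k) qdl pdl = OmuX N T η τ qup qdl pdl := by
    simp only [one_mul]
  exact intermediate_value_Icc zero_le_one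
    ((continuousOn_OmuX_smul N T τ hη hqup hqdl hpdl).mono Set.Icc_subset_Ici_self)
    ⟨h0.le.trans ha0, ha.trans h1.ge⟩

theorem exists_pilot_scale_OunX_eq (hβ : ∀ m, 0 ≤ β m) (hpup : ∀ m, 0 ≤ pup m)
    (hqdl : ∀ j, 0 ≤ qdl j) (hpdl : ∀ m, 0 ≤ pdl m)
    {b : ℝ} (hb0 : 0 ≤ b) (hb : b ≤ OunX N T β α τ pup pdl qdl) :
    ∃ t ∈ Set.Icc (0 : ℝ) 1, OunX N T β α τ (fun m ↦ t * pup m) pdl qdl = b := by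
  have h0 : OunX N T β α τ (fun m ↦ 0 * pup m) pdl qdl = 0 := by simp [OunX, thetaX]
  have h1 : OunX N T β α τ (fun m ↦ 1 * pup m) pdl qdl = OunX N T β α τ pup pdl qdl := by
    simp only [one_mul]
  exact intermediate_value_Icc zero_le_one
    ((continuousOn_OunX_smul N T τ hβ hpup hqdl hpdl).mono Set.Icc_subset_Ici_self)
    ⟨h0.le.trans hb0, hb.trans h1.ge⟩

end PilotScaling

theorem pilot_budget_mul_left {c q E s : ℝ} (hc : 0 ≤ c) (h : 0 ≤ q ∧ c * q ≤ E)
    (hs : s ∈ Set.Icc (0 : ℝ) 1) : 0 ≤ s * q ∧ c * (s * q) ≤ E :=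
  ⟨mul_nonneg hs.1 h.1, by nlinarith [mul_le_mul_of_nonneg_right hs.2 (mul_nonneg hc h.1)]⟩

theorem feasX_smul_pilots {U G : ℕ} {K : Fin G → ℕ} {T τ : ℕ} {P : ℝ}
    {Emu qup : ∀ j : Fin G, Fin (K j) → ℝ} {Eun pup pdl : Fin U → ℝ} {qdl : Fin G → ℝ}
    {s t : ℝ} (hs : s ∈ Set.Icc (0 : ℝ) 1) (ht : t ∈ Set.Icc (0 : ℝ) 1)
    (h : feasX T P Emu Eun τ qup qdl pup pdl) :
    feasX T P Emu Eun τ (fun j k ↦ s * qup j k) qdl (fun m ↦ t * pup m) pdl :=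
  let ⟨hτ, hτT, hqdl, hpdl, hqup, hpup, hP⟩ := h
  ⟨hτ, hτT, hqdl, hpdl, fun j k ↦ pilot_budget_mul_left τ.cast_nonneg (hqup j k) hs,
    fun m ↦ pilot_budget_mul_left τ.cast_nonneg (hpup m) ht, hP⟩

theorem moop_attainable_set_downward_comprehensive_general
    (U G : ℕ) (K : Fin G → ℕ)
    (N : ℕ) (T : ℕ)
    (P : ℝ)
    (η Emu : ∀ j : Fin G, Fin (K j) → ℝ) (β Eun α : Fin U → ℝ)
    (hη : ∀ j k, 0 < η j k)
    (hβ : ∀ m, 0 < β m)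
    (a b a' b' : ℝ) (hab : (a, b) ∈ attainS N T P η Emu β Eun α)
    (ha'0 : 0 ≤ a') (ha' : a' ≤ a) (hb'0 : 0 ≤ b') (hb' : b' ≤ b) :
    (a', b') ∈ attainS N T P η Emu β Eun α := by
  obtain ⟨τ, qup, qdl, pup, pdl, hfeas, hab⟩ := hab
  obtain ⟨rfl, rfl⟩ := Prod.mk.inj hab
  have ⟨_, _, hqdl, hpdl, hqup, hpup, _⟩ := hfeas
  obtain ⟨s, hs, hOmu⟩ := exists_pilot_scale_OmuX_eq N T τ (fun j k ↦ (hη j k).le)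
    (fun j k ↦ (hqup j k).1) hqdl hpdl ha'0 ha'
  obtain ⟨t, ht, hOun⟩ := exists_pilot_scale_OunX_eq N T τ (fun m ↦ (hβ m).le)
    (fun m ↦ (hpup m).1) hqdl hpdl hb'0 hb'
  exact ⟨τ, _, qdl, _, pdl, feasX_smul_pilots hs ht hfeas, by rw [hOmu, hOun]⟩

/-- the attainable set `S` is downward comprehensive in the
nonnegative orthant: if `(a,b) ∈ S` and `0 ≤ a' ≤ a`, `0 ≤ b' ≤ b`, then `(a',b') ∈ S`. -/
theorem moop_attainable_set_downward_comprehensive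
    (U G : ℕ) (hU : 1 ≤ U) (hG : 1 ≤ G) (K : Fin G → ℕ) (hK : ∀ j, 1 ≤ K j)
    (N : ℕ) (hN : 1 ≤ N) (T : ℕ) (hT : U + G ≤ T)
    (P : ℝ) (hP : 0 < P)
    (η Emu : ∀ j : Fin G, Fin (K j) → ℝ) (β Eun α : Fin U → ℝ)
    (hη : ∀ j k, 0 < η j k) (hEmu : ∀ j k, 0 < Emu j k)
    (hβ : ∀ m, 0 < β m) (hEun : ∀ m, 0 < Eun m) (hα : ∀ m, 0 < α m)
    (a b a' b' : ℝ) (hab : (a, b) ∈ attainS N T P η Emu β Eun α)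
    (ha'0 : 0 ≤ a') (ha' : a' ≤ a) (hb'0 : 0 ≤ b') (hb' : b' ≤ b) :
    (a', b') ∈ attainS N T P η Emu β Eun α :=
  moop_attainable_set_downward_comprehensive_general U G K N T P η Emu β Eun α hη hβ a b a' b' hab
    ha'0 ha' hb'0 hb'
end
end
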